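/- Let f be a norm on ℝ^p, let (a, b) be a linear classifier with a ≠ 0, let x_F ∈ ℝ^p satisfy ⟪a, x_F⟫ < b, and let x_CF be an optimal counterfactual of x_F under f with x_CF ≠ x_F. Assume f is differentiable at x_CF − x_F with gradient g (i.e., HasGradientAt f g (x_CF − x_F)). Define â := g and b̂ := ⟪g, x_CF⟫. Then there exists λ ∈ ℝ with λ ≠ 0 such that â = λ • a and b̂ = λ · b; in other words, a single counterfactual query under a differentiable norm recovers the hyperplane of the classifier up to nonzero scaling. -/

import Mathlib

/-!
Write `d = x_CF - x_F`. The optimal counterfactual lies on the hyperplane `⟪a, x⟫ = b`: otherwise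
some `x_F + t • d` with `0 < t < 1` is still classified 'Yes' and, by homogeneity, strictly closer.
Hence `x_CF` also minimizes `f (· - x_F)` along the hyperplane, so the gradient `g` of `f` at `d`
is orthogonal to `a`ᗮ, i.e. `g = λ • a`. Euler's identity `⟪g, d⟫ = f d > 0` for the
positively homogeneous `f` gives `λ ≠ 0`, and `⟪g, x_CF⟫ = λ * ⟪a, x_CF⟫ = λ * b`.
-/

open RealInnerProductSpace

noncomputable section

/-- `f` is a norm on `EuclideanSpace ℝ (Fin p)`. -/
def IsNormE {p : ℕ} (f : EuclideanSpace ℝ (Fin p) → ℝ) : Prop :=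
  (∀ x, f x = 0 ↔ x = 0) ∧ (∀ (c : ℝ) (x : EuclideanSpace ℝ (Fin p)), f (c • x) = |c| * f x) ∧
    (∀ x y, f (x + y) ≤ f x + f y)

/-- `xCF` is an optimal counterfactual of the factual `xF` (classified 'No') under norm `f`. -/
def IsOptCFE {p : ℕ} (a : EuclideanSpace ℝ (Fin p)) (b : ℝ)
    (f : EuclideanSpace ℝ (Fin p) → ℝ) (xF xCF : EuclideanSpace ℝ (Fin p)) : Prop :=
  b ≤ ⟪a, xCF⟫ ∧ ∀ z : EuclideanSpace ℝ (Fin p), b ≤ ⟪a, z⟫ → f (xCF - xF) ≤ f (z - xF)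

theorem nonneg_of_subadditive_of_abs_homogeneous {V : Type*} [AddCommGroup V] [Module ℝ V]
    {f : V → ℝ} (hsmul : ∀ (c : ℝ) x, f (c • x) = |c| * f x)
    (hadd : ∀ x y, f (x + y) ≤ f x + f y) (x : V) : 0 ≤ f x := by
  have hzero : f 0 = 0 := by simpa using hsmul 0 x
  have hneg : f (-x) = f x := by simpa using hsmul (-1) x
  have := hadd x (-x)
  rw [add_neg_cancel, hzero, hneg] at this
  linarith

section InnerProductSpace

variable {E : Type*} [NormedAddCommGroup E] [InnerProductSpace ℝ E]

theorem inner_eq_of_forall_halfspace_le {f : E → ℝ}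
    (hhom : ∀ c : ℝ, 0 < c → ∀ x, f (c • x) = c * f x) {a x₀ x : E} {b : ℝ}
    (hx₀ : ⟪a, x₀⟫ < b) (hx : b ≤ ⟪a, x⟫) (hpos : 0 < f (x - x₀))
    (hmin : ∀ z, b ≤ ⟪a, z⟫ → f (x - x₀) ≤ f (z - x₀)) : ⟪a, x⟫ = b := by
  by_contra hne
  have hlt : b < ⟪a, x⟫ := lt_of_le_of_ne hx (Ne.symm hne)
  have hden : 0 < ⟪a, x⟫ - ⟪a, x₀⟫ := by linarith
  -- `x₀ + t • (x - x₀)` is on the hyperplane and strictly closer to `x₀` than `x`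
  set t := (b - ⟪a, x₀⟫) / (⟪a, x⟫ - ⟪a, x₀⟫)
  have ht0 : 0 < t := div_pos (by linarith) hden
  have ht1 : t < 1 := (div_lt_one hden).2 (by linarith)
  have hz : ⟪a, x₀ + t • (x - x₀)⟫ = b := by
    rw [inner_add_right, real_inner_smul_right, inner_sub_right, div_mul_cancel₀ _ hden.ne']
    ring
  have := hmin _ hz.ge
  rw [add_sub_cancel_left, hhom t ht0] at this
  nlinarith

variable [CompleteSpace E] {f : E → ℝ} {g x : E}

theorem HasGradientAt.hasDerivAt_add_smul (hg : HasGradientAt f g x) (v : E) :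
    HasDerivAt (fun t : ℝ => f (x + t • v)) ⟪g, v⟫ 0 := by
  have hline : HasDerivAt (fun t : ℝ => x + t • v) v 0 := by
    simpa using ((hasDerivAt_id (0 : ℝ)).smul_const v).const_add x
  have := hg.hasFDerivAt.comp_hasDerivAt_of_eq 0 hline (by simp)
  rwa [InnerProductSpace.toDual_apply_apply] at this

theorem HasGradientAt.inner_self_eq_of_pos_homogeneous (hg : HasGradientAt f g x)
    (hhom : ∀ c : ℝ, 0 < c → f (c • x) = c * f x) : ⟪g, x⟫ = f x := by
  have hray : (fun t : ℝ => f (x + t • x)) =ᶠ[nhds 0] fun t => (1 + t) * f x := by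
    filter_upwards [eventually_gt_nhds (neg_one_lt_zero : (-1 : ℝ) < 0)] with t ht
    rw [show x + t • x = (1 + t) • x by rw [add_smul, one_smul], hhom _ (by linarith)]
  have hlin : HasDerivAt (fun t : ℝ => (1 + t) * f x) (f x) 0 := by
    simpa using ((hasDerivAt_id (0 : ℝ)).const_add 1).mul_const (f x)
  exact (hg.hasDerivAt_add_smul x).unique (hlin.congr_of_eventuallyEq hray)

theorem HasGradientAt.mem_orthogonal_of_forall_le_add (hg : HasGradientAt f g x)
    (K : Submodule ℝ E) (hmin : ∀ v ∈ K, f x ≤ f (x + v)) : g ∈ Kᗮ := by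
  refine (K.mem_orthogonal' g).2 fun v hv => ?_
  have hlocal : IsLocalMin (fun t : ℝ => f (x + t • v)) 0 :=
    Filter.Eventually.of_forall fun t => by simpa using hmin _ (K.smul_mem t hv)
  exact hlocal.hasDerivAt_eq_zero (hg.hasDerivAt_add_smul v)

end InnerProductSpace

theorem cf_extraction_differentiable {p : ℕ}
    (f : EuclideanSpace ℝ (Fin p) → ℝ) (hf : IsNormE f)
    (a : EuclideanSpace ℝ (Fin p)) (b : ℝ)
    (xF xCF : EuclideanSpace ℝ (Fin p)) (hxF : ⟪a, xF⟫ < b)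
    (hopt : IsOptCFE a b f xF xCF)
    (g : EuclideanSpace ℝ (Fin p)) (hgrad : HasGradientAt f g (xCF - xF)) :
    ∃ l : ℝ, l ≠ 0 ∧ g = l • a ∧ ⟪g, xCF⟫ = l * b := by
  obtain ⟨hzero, hsmul, hadd⟩ := hf
  obtain ⟨hCF, hmin⟩ := hopt
  have hhom : ∀ c : ℝ, 0 < c → ∀ x, f (c • x) = c * f x := fun c hc x => by
    rw [hsmul, abs_of_pos hc]
  have hne : xCF - xF ≠ 0 := sub_ne_zero.2 fun h => by rw [h] at hCF; linarith
  have hpos : 0 < f (xCF - xF) :=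
    (nonneg_of_subadditive_of_abs_homogeneous hsmul hadd _).lt_of_ne
      fun h => hne ((hzero _).1 h.symm)
  have hb : ⟪a, xCF⟫ = b := inner_eq_of_forall_halfspace_le hhom hxF hCF hpos hmin
  have hnormal : g ∈ (ℝ ∙ a)ᗮᗮ := hgrad.mem_orthogonal_of_forall_le_add _ fun v hv => by
    have hav : ⟪a, v⟫ = 0 := Submodule.mem_orthogonal_singleton_iff_inner_right.1 hv
    simpa [sub_add_eq_add_sub] using hmin (xCF + v) (by rw [inner_add_right, hav, hb, add_zero])
  rw [Submodule.orthogonal_orthogonal] at hnormal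
  obtain ⟨l, rfl⟩ := Submodule.mem_span_singleton.1 hnormal
  have heuler := hgrad.inner_self_eq_of_pos_homogeneous fun c hc => hhom c hc _
  refine ⟨l, ?_, rfl, by rw [real_inner_smul_left, hb]⟩
  rintro rfl
  rw [zero_smul, inner_zero_left] at heuler
  linarith
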